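/- arXiv:1211.3605 — 2 statements merged into one kernel-verified Lean document; each statement's English description precedes it below -/
import Mathlib

section
/- Let A : ℝ → gl_n(ℝ) be a differentiable curve satisfying A' = -tr(S(A)²)·A + (1/2)[A,[A,Aᵗ]] - (1/2)tr(A)·[A,Aᵗ]. Then (d/dt)tr(S(A)²) = -2·tr(S(A)²)² - (1/2)‖[A,Aᵗ]‖² ≤ 0. -/
open Matrix Filter

noncomputable section

abbrev Mat (n : ℕ) := Matrix (Fin n) (Fin n) ℝ

/-- Commutator bracket of matrices. -/
def bkt {n : ℕ} (X Y : Mat n) : Mat n := X * Y - Y * X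

/-- Frobenius inner product ⟨X,Y⟩ = tr(XYᵗ). -/
def frob {n : ℕ} (X Y : Mat n) : ℝ := Matrix.trace (X * Yᵀ)

/-- Squared Frobenius norm ‖X‖² = tr(XXᵗ). -/
def sqnorm {n : ℕ} (X : Mat n) : ℝ := frob X X

/-- Symmetric part S(X) = (X+Xᵗ)/2. -/
def symPart {n : ℕ} (X : Mat n) : Mat n := (1/2 : ℝ) • (X + Xᵀ)

/-- Right-hand side of the bracket flow ODE. -/
def rhs {n : ℕ} (A : Mat n) : Mat n :=
  (-(Matrix.trace (symPart A * symPart A))) • A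
    + (1/2 : ℝ) • bkt A (bkt A Aᵀ)
    - ((1/2 : ℝ) * Matrix.trace A) • bkt A Aᵀ

/-! Differentiating gives `(d/dt) tr(S(A)²) = 2 tr(A' S(A))`, since `S(A)` is symmetric. Writing
`T = [A, Aᵗ]`, one has `[S(A), A] = [Aᵗ, S(A)] = -½ T`, so cyclicity of the trace
(`tr([X,Y] Z) = tr(X [Y,Z])`) gives `tr(T S(A)) = -½ tr(A T) = -½ tr([A,A] Aᵗ) = 0` and
`tr([A,T] S(A)) = tr(T [S(A),A]) = -½ ‖T‖²`; the term `-tr(S(A)²) A` contributes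
`-tr(S(A)²)²`. -/

section

variable {n : ℕ}

lemma sqnorm_nonneg (X : Mat n) : 0 ≤ sqnorm X := by
  simpa [sqnorm, frob, conjTranspose_eq_transpose_of_trivial] using
    (posSemidef_self_mul_conjTranspose X).trace_nonneg

lemma bkt_self (X : Mat n) : bkt X X = 0 := sub_self _

lemma bkt_swap (X Y : Mat n) : bkt X Y = -bkt Y X := (neg_sub _ _).symm

lemma trace_bkt_mul (X Y Z : Mat n) : trace (bkt X Y * Z) = trace (X * bkt Y Z) := by
  simp only [bkt, sub_mul, mul_sub, trace_sub, mul_assoc]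
  rw [← mul_assoc X Z Y, trace_mul_cycle, mul_assoc]

lemma symPart_isSymm (X : Mat n) : (symPart X).IsSymm := by
  simp [IsSymm, symPart, add_comm]

lemma bkt_self_transpose_isSymm (X : Mat n) : (bkt X Xᵀ).IsSymm := by
  simp [IsSymm, bkt, transpose_sub, transpose_mul]

lemma trace_symPart_mul {X S : Mat n} (hS : S.IsSymm) :
    trace (symPart X * S) = trace (X * S) := by
  have h : trace (Xᵀ * S) = trace (X * S) := by
    rw [← trace_transpose, transpose_mul, transpose_transpose, hS.eq, trace_mul_comm]
  simp only [symPart, smul_mul_assoc, add_mul, trace_smul, trace_add, h, smul_eq_mul]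
  ring

lemma bkt_symPart_self (X : Mat n) : bkt (symPart X) X = (-(1/2) : ℝ) • bkt X Xᵀ := by
  simp only [symPart, bkt, add_mul, mul_add, smul_mul_assoc, mul_smul_comm]
  module

lemma bkt_transpose_symPart (X : Mat n) : bkt Xᵀ (symPart X) = (-(1/2) : ℝ) • bkt X Xᵀ := by
  simp only [symPart, bkt, add_mul, mul_add, smul_mul_assoc, mul_smul_comm]
  module

lemma trace_bkt_self_transpose_mul_symPart (X : Mat n) :
    trace (bkt X Xᵀ * symPart X) = 0 := by
  rw [trace_bkt_mul, bkt_transpose_symPart, mul_smul_comm, trace_smul, ← trace_bkt_mul,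
    bkt_self, zero_mul, trace_zero, smul_zero]

lemma trace_bkt_bkt_mul_symPart (X : Mat n) :
    trace (bkt X (bkt X Xᵀ) * symPart X) = -(1/2) * sqnorm (bkt X Xᵀ) := by
  rw [bkt_swap X (bkt X Xᵀ), neg_mul, trace_neg, trace_bkt_mul, bkt_swap X (symPart X), bkt_symPart_self,
    mul_neg, trace_neg, neg_neg, mul_smul_comm, trace_smul, sqnorm, frob,
    (bkt_self_transpose_isSymm X).eq, smul_eq_mul]

lemma trace_rhs_mul_symPart (X : Mat n) :
    trace (rhs X * symPart X)
      = -(trace (symPart X * symPart X)) ^ 2 - (1/4) * sqnorm (bkt X Xᵀ) := by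
  simp only [rhs, sub_mul, add_mul, smul_mul_assoc, trace_sub, trace_add, trace_smul,
    smul_eq_mul, trace_bkt_self_transpose_mul_symPart, trace_bkt_bkt_mul_symPart,
    ← trace_symPart_mul (X := X) (symPart_isSymm X)]
  ring

variable {A M N : ℝ → Mat n} {A' M' N' : Mat n} {t : ℝ}

lemma hasDerivAt_trace_mul (hM : ∀ i j, HasDerivAt (fun s => M s i j) (M' i j) t)
    (hN : ∀ i j, HasDerivAt (fun s => N s i j) (N' i j) t) :
    HasDerivAt (fun s => trace (M s * N s)) (trace (M' * N t) + trace (M t * N')) t := by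
  simp only [trace, diag, mul_apply, ← Finset.sum_add_distrib]
  exact HasDerivAt.fun_sum fun i _ => HasDerivAt.fun_sum fun j _ => (hM i j).mul (hN j i)

lemma hasDerivAt_symPart_apply (hA : ∀ i j, HasDerivAt (fun s => A s i j) (A' i j) t)
    (i j : Fin n) :
    HasDerivAt (fun s => symPart (A s) i j) (symPart A' i j) t := by
  simpa [symPart] using ((hA i j).add (hA j i)).const_mul (1/2 : ℝ)

lemma hasDerivAt_trace_symPart_sq (hA : ∀ i j, HasDerivAt (fun s => A s i j) (A' i j) t) :
    HasDerivAt (fun s => trace (symPart (A s) * symPart (A s)))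
      (2 * trace (A' * symPart (A t))) t := by
  have hS := hasDerivAt_symPart_apply hA
  convert hasDerivAt_trace_mul hS hS using 1
  rw [trace_mul_comm (symPart (A t)), trace_symPart_mul (symPart_isSymm _)]
  ring

end

theorem stmt10 {n : ℕ} (A : ℝ → Mat n)
    (hA : ∀ t : ℝ, ∀ i j, HasDerivAt (fun s => A s i j) (rhs (A t) i j) t) :
    ∀ t : ℝ,
      HasDerivAt (fun s => Matrix.trace (symPart (A s) * symPart (A s)))
        (-2 * (Matrix.trace (symPart (A t) * symPart (A t))) ^ 2
          - (1/2) * sqnorm (bkt (A t) (A t)ᵀ)) t ∧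
      -2 * (Matrix.trace (symPart (A t) * symPart (A t))) ^ 2
          - (1/2) * sqnorm (bkt (A t) (A t)ᵀ) ≤ 0 := by
  intro t
  have hderiv := hasDerivAt_trace_symPart_sq (hA t)
  rw [trace_rhs_mul_symPart] at hderiv
  refine ⟨by convert hderiv using 1; ring, ?_⟩
  linarith [sq_nonneg (trace (symPart (A t) * symPart (A t))), sqnorm_nonneg (bkt (A t) (A t)ᵀ)]
end
end

section
/- Let A : ℝ → gl_n(ℝ) satisfy A' = -tr(S(A)²)·A + (1/2)[A,[A,Aᵗ]] - (1/2)tr(A)·[A,Aᵗ], with A(t) ≠ 0 for all t, and let B(t) = A(t)/‖A(t)‖. Then B satisfies B' = (‖A‖²/2)·([B,[B,Bᵗ]] - tr(B)·[B,Bᵗ] + ‖[B,Bᵗ]‖²·B). -/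
open Matrix Filter

noncomputable section

/-! Since `d/dt ‖A‖² = 2⟨A, A'⟩`, the normalized curve `B = A / ‖A‖` moves by the component of
`A' / ‖A‖` orthogonal to `B`. The right-hand side is homogeneous of degree three, so
`A' = ‖A‖³ rhs(B)`, and projecting orthogonally to `B` kills the radial term `-tr(S(B)²) B`.
What is left of `⟨B, rhs B⟩ B` is `½‖[B,Bᵗ]‖² B`, because `⟨B, [B,Bᵗ]⟩ = 0` and
`⟨B, [B,[B,Bᵗ]]⟩ = -‖[B,Bᵗ]‖²`. -/

section

variable {n : ℕ}

lemma frob_eq_sum (X Y : Mat n) : frob X Y = ∑ i, ∑ j, X i j * Y i j := by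
  simp [frob, Matrix.trace, Matrix.mul_apply]

lemma frob_add_right (X Y Z : Mat n) : frob X (Y + Z) = frob X Y + frob X Z := by
  simp [frob, mul_add]

lemma frob_sub_right (X Y Z : Mat n) : frob X (Y - Z) = frob X Y - frob X Z := by
  simp [frob, mul_sub]

lemma frob_smul_right (a : ℝ) (X Y : Mat n) : frob X (a • Y) = a * frob X Y := by
  simp [frob]

lemma frob_smul_left (a : ℝ) (X Y : Mat n) : frob (a • X) Y = a * frob X Y := by
  simp [frob]

lemma sqnorm_smul (a : ℝ) (X : Mat n) : sqnorm (a • X) = a ^ 2 * sqnorm X := by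
  rw [sqnorm, frob_smul_left, frob_smul_right, sqnorm]; ring

lemma sqnorm_pos {X : Mat n} (hX : X ≠ 0) : 0 < sqnorm X := by
  have hnonneg : 0 ≤ sqnorm X := by
    simpa [sqnorm, frob] using (posSemidef_self_mul_conjTranspose X).trace_nonneg
  refine hnonneg.lt_of_ne' fun h => hX ?_
  exact trace_mul_conjTranspose_self_eq_zero_iff.mp (by simpa [sqnorm, frob] using h)

lemma bkt_smul_smul (a b : ℝ) (X Y : Mat n) : bkt (a • X) (b • Y) = (a * b) • bkt X Y := by
  simp only [bkt, smul_mul_smul_comm, mul_comm b a, smul_sub]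

lemma transpose_bkt_self_transpose (X : Mat n) : (bkt X Xᵀ)ᵀ = bkt X Xᵀ := by
  simp [bkt]

lemma frob_bkt_self_transpose (X : Mat n) : frob X (bkt X Xᵀ) = 0 := by
  rw [frob, transpose_bkt_self_transpose, bkt, mul_sub, trace_sub, ← Matrix.mul_assoc,
    ← Matrix.mul_assoc, trace_mul_cycle X Xᵀ X, sub_self]

lemma frob_bkt_bkt_self_transpose (X : Mat n) :
    frob X (bkt X (bkt X Xᵀ)) = -sqnorm (bkt X Xᵀ) := by
  set C := bkt X Xᵀ with hC
  have hCt : Cᵀ = C := transpose_bkt_self_transpose X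
  have hXC : trace (X * (X * C - C * X)ᵀ) = trace ((Xᵀ * X - X * Xᵀ) * C) := by
    rw [transpose_sub, transpose_mul, transpose_mul, hCt, mul_sub, sub_mul, trace_sub, trace_sub,
      ← Matrix.mul_assoc, trace_mul_cycle X C Xᵀ, ← Matrix.mul_assoc]
  rw [frob, bkt, hXC, ← neg_sub, ← bkt, ← hC, neg_mul, trace_neg, sqnorm, frob, hCt]

lemma frob_self_rhs (X : Mat n) :
    frob X (rhs X) = -trace (symPart X * symPart X) * sqnorm X - 1 / 2 * sqnorm (bkt X Xᵀ) := by
  rw [rhs, frob_sub_right, frob_add_right, frob_smul_right, frob_smul_right, frob_smul_right,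
    frob_bkt_self_transpose, frob_bkt_bkt_self_transpose]
  unfold sqnorm
  ring

lemma symPart_smul (c : ℝ) (X : Mat n) : symPart (c • X) = c • symPart X := by
  simp only [symPart, transpose_smul, ← smul_add, smul_comm c]

lemma rhs_smul (c : ℝ) (X : Mat n) : rhs (c • X) = c ^ 3 • rhs X := by
  simp only [rhs, symPart_smul, transpose_smul, bkt_smul_smul, smul_mul_smul_comm, trace_smul,
    smul_eq_mul]
  module

lemma rhs_sub_frob_smul_of_sqnorm_eq_one {B : Mat n} (hB : sqnorm B = 1) :
    rhs B - frob B (rhs B) • B =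
      (1 / 2 : ℝ) • (bkt B (bkt B Bᵀ) - trace B • bkt B Bᵀ + sqnorm (bkt B Bᵀ) • B) := by
  rw [frob_self_rhs, hB, rhs]
  module

def frobNormalize (X : Mat n) : Mat n := (√(sqnorm X))⁻¹ • X

lemma sqnorm_frobNormalize {X : Mat n} (hX : X ≠ 0) : sqnorm (frobNormalize X) = 1 := by
  rw [frobNormalize, sqnorm_smul, inv_pow, Real.sq_sqrt (sqnorm_pos hX).le,
    inv_mul_cancel₀ (sqnorm_pos hX).ne']

lemma sqrt_sqnorm_smul_frobNormalize {X : Mat n} (hX : X ≠ 0) :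
    √(sqnorm X) • frobNormalize X = X := by
  rw [frobNormalize, smul_smul, mul_inv_cancel₀ (Real.sqrt_pos.mpr (sqnorm_pos hX)).ne', one_smul]

variable {A : ℝ → Mat n} {D : Mat n} {t : ℝ}

lemma hasDerivAt_sqnorm (hA : ∀ i j, HasDerivAt (fun s => A s i j) (D i j) t) :
    HasDerivAt (fun s => sqnorm (A s)) (2 * frob (A t) D) t := by
  have hsum : HasDerivAt (fun s => ∑ i, ∑ j, A s i j * A s i j)
      (∑ i, ∑ j, (D i j * A t i j + A t i j * D i j)) t :=
    HasDerivAt.fun_sum fun i _ => HasDerivAt.fun_sum fun j _ => (hA i j).mul (hA i j)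
  simp only [sqnorm, frob_eq_sum]
  convert hsum using 1
  simp only [Finset.mul_sum]
  exact Finset.sum_congr rfl fun i _ => Finset.sum_congr rfl fun j _ => by ring

lemma hasDerivAt_frobNormalize (hA : ∀ i j, HasDerivAt (fun s => A s i j) (D i j) t)
    (hne : A t ≠ 0) (i j : Fin n) :
    HasDerivAt (fun s => frobNormalize (A s) i j)
      (((√(sqnorm (A t)))⁻¹ • (D - frob (frobNormalize (A t)) D • frobNormalize (A t))) i j) t := by
  have hpos := sqnorm_pos hne
  have hinv := (((Real.hasDerivAt_sqrt hpos.ne').comp t (hasDerivAt_sqnorm hA)).inv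
    (Real.sqrt_pos.mpr hpos).ne').mul (hA i j)
  refine hinv.congr_deriv ?_
  simp only [frobNormalize, frob_smul_left, Matrix.smul_apply, Matrix.sub_apply, smul_eq_mul,
    Function.comp_apply, Pi.inv_apply]
  field_simp
  rw [Real.sq_sqrt hpos.le]
  ring

end

theorem stmt15 {n : ℕ} (A : ℝ → Mat n)
    (hA : ∀ t : ℝ, ∀ i j, HasDerivAt (fun s => A s i j) (rhs (A t) i j) t)
    (hne : ∀ t : ℝ, A t ≠ 0)
    (B : ℝ → Mat n) (hB : ∀ t, B t = (Real.sqrt (sqnorm (A t)))⁻¹ • A t) :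
    ∀ t : ℝ, ∀ i j, HasDerivAt (fun s => B s i j)
      (((sqnorm (A t) / 2) •
        (bkt (B t) (bkt (B t) (B t)ᵀ)
          - Matrix.trace (B t) • bkt (B t) (B t)ᵀ
          + sqnorm (bkt (B t) (B t)ᵀ) • B t)) i j) t := by
  obtain rfl : B = fun s => frobNormalize (A s) := funext hB
  intro t i j
  set N := frobNormalize (A t)
  set u := √(sqnorm (A t))
  have hu2 : u ^ 2 = sqnorm (A t) := Real.sq_sqrt (sqnorm_pos (hne t)).le
  have hrhs : rhs (A t) = u ^ 3 • rhs N := by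
    rw [← rhs_smul, sqrt_sqnorm_smul_frobNormalize (hne t)]
  have htangent : u⁻¹ • (rhs (A t) - frob N (rhs (A t)) • N) =
      (sqnorm (A t) / 2) • (bkt N (bkt N Nᵀ) - trace N • bkt N Nᵀ + sqnorm (bkt N Nᵀ) • N) := by
    rw [hrhs, frob_smul_right, mul_smul, ← smul_sub, smul_smul,
      rhs_sub_frob_smul_of_sqnorm_eq_one (sqnorm_frobNormalize (hne t)), smul_smul, ← hu2]
    congr 1
    field_simp
  rw [← htangent]
  exact hasDerivAt_frobNormalize (hA t) (hne t) i j
end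
end
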